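/- Let u be a sequence over a finite alphabet and n ∈ ℕ. Suppose i = Ind_u(n) > 0, and let v be the factor of u of length n at position i. Then T(v) ≥ 2. -/

import Mathlib

/-!
Write `i = i' + 1`. The occurrence of `v` at `i` extends to the factor of length `n + 2` at `i'`,
an element of `Bext(v)`. The later reflective occurrence `j > i` of the factor of length `n + 1`
at `i` yields a second extension, in `Bext(v)` or `Bext(v̄)`, starting at a position `≥ i`. If the
two extensions were reflectively equivalent, dropping their last letters would give a later
reflective occurrence of the factor of length `n + 1` at `i'`, contradicting the minimality of `i`.
-/

namespace ReflPaper

variable {A : Type*}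

/-- The factor of `u` of length `n` at position `i`: `u(i) u(i+1) ⋯ u(i+n-1)`. -/
def factorAt (u : ℕ → A) (n i : ℕ) : List A :=
  (List.range n).map (fun k => u (i + k))

/-- The word `w` occurs in the sequence `u` at position `i`. -/
def OccursAt (u : ℕ → A) (w : List A) (i : ℕ) : Prop :=
  w = factorAt u w.length i

/-- The language of `u`: the set of all factors of `u`. -/
def Lang (u : ℕ → A) : Set (List A) := {w | ∃ i, OccursAt u w i}

/-- The set of factors of `u` of length `n`. -/
def LangN (u : ℕ → A) (n : ℕ) : Set (List A) := {w | w.length = n ∧ w ∈ Lang u}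

/-- The word `w` occurs infinitely many times in `u`. -/
def OccursInf (u : ℕ → A) (w : List A) : Prop := {i | OccursAt u w i}.Infinite

/-- `u` is eventually periodic. -/
def EventuallyPeriodic (u : ℕ → A) : Prop :=
  ∃ N p : ℕ, 1 ≤ p ∧ ∀ i, N ≤ i → u (i + p) = u i

/-- Two words are reflectively equivalent if one equals the other or its reversal. -/
def ReflEquiv (w v : List A) : Prop := w = v ∨ w = v.reverse

/-- Reflective equivalence as a setoid on words. -/
def reflSetoid (A : Type*) : Setoid (List A) where
  r := ReflEquiv
  iseqv := by
    constructor
    · intro w; exact Or.inl rfl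
    · intro w v h
      rcases h with h | h
      · exact Or.inl h.symm
      · subst h; simp [ReflEquiv]
    · intro w v x h1 h2
      rcases h1 with h1 | h1 <;> rcases h2 with h2 | h2 <;> subst h1 <;>
        simp [ReflEquiv, h2]

/-- The number of reflective-equivalence classes of words in a set `S`. -/
noncomputable def nClasses (S : Set (List A)) : ℕ :=
  Set.ncard (Quotient.mk (reflSetoid A) '' S)

/-- The reflection complexity `r_u(n)`. -/
noncomputable def reflComplexity (u : ℕ → A) (n : ℕ) : ℕ := nClasses (LangN u n)

/-- The factor complexity `C_u(n) = #L_n(u)`. -/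
noncomputable def factorComplexity (u : ℕ → A) (n : ℕ) : ℕ := (LangN u n).ncard

/-- The palindromic complexity `P_u(n)`. -/
noncomputable def palComplexity (u : ℕ → A) (n : ℕ) : ℕ :=
  Set.ncard {w ∈ LangN u n | w.reverse = w}

/-- Both-sided extensions of `w` in the language of `u`. -/
def Bext (u : ℕ → A) (w : List A) : Set (List A) :=
  {x ∈ Lang u | ∃ a b : A, x = a :: (w ++ [b])}

/-- Right extensions of `w` in the language of `u`. -/
def Rext (u : ℕ → A) (w : List A) : Set (List A) :=
  {x ∈ Lang u | ∃ a : A, x = w ++ [a]}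

/-- `T(w)`: the number of reflective-equivalence classes of `Bext(w) ∪ Bext(w̄)`. -/
noncomputable def TT (u : ℕ → A) (w : List A) : ℕ :=
  nClasses (Bext u w ∪ Bext u w.reverse)

/-- `w` is a right special factor of `u`. -/
def RightSpecial (u : ℕ → A) (w : List A) : Prop :=
  ∃ a b : A, a ≠ b ∧ w ++ [a] ∈ Lang u ∧ w ++ [b] ∈ Lang u

/-- `w` is a left special factor of `u`. -/
def LeftSpecial (u : ℕ → A) (w : List A) : Prop :=
  ∃ a b : A, a ≠ b ∧ a :: w ∈ Lang u ∧ b :: w ∈ Lang u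

/-- `u` is Sturmian: `C_u(n) = n + 1` for all `n`. -/
def Sturmian (u : ℕ → A) : Prop := ∀ n, factorComplexity u n = n + 1

/-- `u` is quasi-Sturmian: `C_u(n) = n + c` eventually. -/
def QuasiSturmian (u : ℕ → A) : Prop :=
  ∃ n₀ c : ℕ, ∀ n, n₀ ≤ n → factorComplexity u n = n + c


/-- For `m = n + 1`, `Ind_u(n)` is the least element of this set. -/
def reflRecurrentPositions (u : ℕ → A) (m : ℕ) : Set ℕ :=
  {i | ∃ j, i < j ∧ ReflEquiv (factorAt u m i) (factorAt u m j)}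

lemma length_factorAt (u : ℕ → A) (m i : ℕ) : (factorAt u m i).length = m := by
  simp [factorAt]

lemma factorAt_succ (u : ℕ → A) (m i : ℕ) :
    factorAt u (m + 1) i = factorAt u m i ++ [u (i + m)] := by
  simp [factorAt, List.range_succ]

lemma factorAt_succ' (u : ℕ → A) (m i : ℕ) :
    factorAt u (m + 1) i = u i :: factorAt u m (i + 1) := by
  simp only [factorAt, List.range_succ_eq_map, List.map_cons, List.map_map]
  congr 1
  exact List.map_congr_left fun k _ => congrArg u (by omega)

lemma factorAt_mem_lang (u : ℕ → A) (m i : ℕ) : factorAt u m i ∈ Lang u :=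
  ⟨i, by rw [OccursAt, length_factorAt]⟩

/-- Under a reversal, the dropped last letter of the first factor matches the first letter of
the second one, hence the shift of its position. -/
lemma exists_reflEquiv_factorAt_of_succ {u : ℕ → A} {m p q : ℕ}
    (h : ReflEquiv (factorAt u (m + 1) p) (factorAt u (m + 1) q)) :
    ∃ r, q ≤ r ∧ r ≤ q + 1 ∧ ReflEquiv (factorAt u m p) (factorAt u m r) := by
  rcases h with h | h
  · rw [factorAt_succ, factorAt_succ] at h
    exact ⟨q, le_rfl, q.le_succ, Or.inl (List.append_inj h (by simp [length_factorAt])).1⟩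
  · rw [factorAt_succ, factorAt_succ', List.reverse_cons] at h
    exact ⟨q + 1, q.le_succ, le_rfl, Or.inr (List.append_inj h (by simp [length_factorAt])).1⟩

lemma reflRecurrentPositions_succ_subset (u : ℕ → A) (m : ℕ) :
    reflRecurrentPositions u (m + 1) ⊆ reflRecurrentPositions u m := by
  rintro p ⟨q, hpq, h⟩
  obtain ⟨r, hqr, -, hr⟩ := exists_reflEquiv_factorAt_of_succ h
  exact ⟨r, hpq.trans_le hqr, hr⟩

lemma factorAt_mem_bext_union {u : ℕ → A} {w : List A} {m p : ℕ}
    (h : ReflEquiv w (factorAt u m (p + 1))) :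
    factorAt u (m + 2) p ∈ Bext u w ∪ Bext u w.reverse := by
  have hext : factorAt u (m + 2) p = u p :: (factorAt u m (p + 1) ++ [u (p + 1 + m)]) := by
    rw [factorAt_succ', factorAt_succ]
  rcases h with rfl | rfl
  · exact Or.inl ⟨factorAt_mem_lang u _ p, _, _, hext⟩
  · exact Or.inr ⟨factorAt_mem_lang u _ p, _, _, by rwa [List.reverse_reverse]⟩

lemma bext_finite [Finite A] (u : ℕ → A) (w : List A) : (Bext u w).Finite :=
  (List.finite_length_eq A (w.length + 2)).subset <| by
    rintro x ⟨-, a, b, rfl⟩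
    simp

lemma two_le_nClasses {S : Set (List A)} (hS : S.Finite) {x y : List A} (hx : x ∈ S)
    (hy : y ∈ S) (hxy : ¬ ReflEquiv x y) : 2 ≤ nClasses S := by
  have hne : Quotient.mk (reflSetoid A) x ≠ Quotient.mk (reflSetoid A) y :=
    fun h => hxy (Quotient.exact h)
  rw [nClasses, ← Set.ncard_pair hne]
  exact Set.ncard_le_ncard (Set.pair_subset (Set.mem_image_of_mem _ hx)
    (Set.mem_image_of_mem _ hy)) (hS.image _)

/-- if `i = Ind_u(n) > 0` and `v` is the factor of length `n`
at position `i`, then `T(v) ≥ 2`. -/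
theorem stmt5 {A : Type*} [Fintype A] (u : ℕ → A) (n i : ℕ)
    (hleast : IsLeast {i : ℕ | ∃ j : ℕ, i < j ∧
      ReflEquiv (factorAt u (n + 1) i) (factorAt u (n + 1) j)} i)
    (hi : 0 < i) :
    2 ≤ TT u (factorAt u n i) := by
  obtain ⟨i, rfl⟩ := Nat.exists_eq_add_one.mpr hi
  obtain ⟨⟨j, hij, hj⟩, hmin⟩ := hleast
  obtain ⟨r, hjr, -, hr⟩ := exists_reflEquiv_factorAt_of_succ hj
  obtain ⟨s, rfl⟩ : ∃ s, r = s + 1 := ⟨r - 1, by omega⟩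
  refine two_le_nClasses ((bext_finite u _).union (bext_finite u _))
    (factorAt_mem_bext_union (Or.inl rfl)) (factorAt_mem_bext_union hr) fun hxy => ?_
  have hi_mem : i ∈ reflRecurrentPositions u (n + 1) :=
    reflRecurrentPositions_succ_subset u (n + 1) ⟨s, by omega, hxy⟩
  exact absurd (hmin hi_mem) (by omega)

end ReflPaper
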